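/- arXiv:0907.4757 — 3 statements merged into one kernel-verified Lean document; each statement's English description precedes it below -/
import Mathlib

section
/- Let a and b be finite nonempty types and let ψ : a × b → ℂ be a unit vector (∑_{(i,k)} ‖ψ (i,k)‖² = 1) with density matrix ρ = |ψ⟩⟨ψ|. Then the von Neumann entropy of the partial trace of ρ over b equals the von Neumann entropy of the partial trace of ρ over a: S(tr_b ρ) = S(tr_a ρ). (This is the fact, used throughout the combing protocol, that for a pure state |φ⟩_{X,Y} one has S(X) = S(Y).) -/
/-- The density matrix `|ψ⟩⟨ψ|` of a vector `ψ`. -/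
noncomputable def densityMatrix {n : Type} [Fintype n] (ψ : n → ℂ) : Matrix n n ℂ :=
  fun i j => ψ i * star (ψ j)

/-- Partial trace over the second tensor factor. -/
noncomputable def ptraceB {a b : Type} [Fintype a] [Fintype b]
    (ρ : Matrix (a × b) (a × b) ℂ) : Matrix a a ℂ :=
  fun i j => ∑ k : b, ρ (i, k) (j, k)

/-- Partial trace over the first tensor factor. -/
noncomputable def ptraceA {a b : Type} [Fintype a] [Fintype b]
    (ρ : Matrix (a × b) (a × b) ℂ) : Matrix b b ℂ :=
  fun k l => ∑ i : a, ρ (i, k) (i, l)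

/-- The von Neumann entropy of a Hermitian matrix, `S(σ) = ∑ᵢ -λᵢ log λᵢ`. -/
noncomputable def vonNeumannEntropy {n : Type} [Fintype n] [DecidableEq n]
    {σ : Matrix n n ℂ} (hσ : σ.IsHermitian) : ℝ :=
  ∑ i, Real.negMulLog (hσ.eigenvalues i)

/-! Viewing `ψ` as an `a × b` matrix `M`, the two marginals are `M Mᴴ` and `(Mᴴ M)ᵀ`. By Sylvester's
determinant identity their characteristic polynomials agree up to a power of `X`, so they have the
same nonzero eigenvalues with multiplicity, and the entropy only sees nonzero eigenvalues since
`negMulLog 0 = 0`. -/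

open Matrix Polynomial

namespace Matrix.IsHermitian

variable {𝕜 : Type*} [RCLike 𝕜] {m n : Type*} [Fintype m] [DecidableEq m] [Fintype n]
  [DecidableEq n] {A : Matrix m m 𝕜} {B : Matrix n n 𝕜}

lemma roots_X_pow_mul_charpoly (hA : A.IsHermitian) (k : ℕ) :
    (X ^ k * A.charpoly).roots =
      k • {0} + Multiset.map (RCLike.ofReal ∘ hA.eigenvalues) Finset.univ.val := by
  rw [roots_mul (mul_ne_zero (pow_ne_zero _ X_ne_zero) A.charpoly_monic.ne_zero),
    roots_X_pow, hA.roots_charpoly_eq_eigenvalues]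

lemma sum_eigenvalues_eq_of_X_pow_mul_charpoly_eq (hA : A.IsHermitian) (hB : B.IsHermitian)
    (hAB : X ^ Fintype.card n * A.charpoly = X ^ Fintype.card m * B.charpoly)
    {f : ℝ → ℝ} (hf : f 0 = 0) :
    ∑ i, f (hA.eigenvalues i) = ∑ j, f (hB.eigenvalues j) := by
  have hroots := congrArg (fun p => ((p.roots).map (f ∘ RCLike.re)).sum) hAB
  simp only [hA.roots_X_pow_mul_charpoly, hB.roots_X_pow_mul_charpoly, Multiset.map_add,
    Multiset.sum_add, Multiset.map_nsmul, Multiset.sum_nsmul, Multiset.map_singleton,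
    Multiset.sum_singleton, Multiset.map_map, Function.comp_apply, RCLike.zero_re,
    RCLike.ofReal_re, hf, smul_zero, zero_add] at hroots
  exact hroots

end Matrix.IsHermitian

lemma vonNeumannEntropy_eq_of_X_pow_mul_charpoly_eq {m n : Type} [Fintype m] [DecidableEq m]
    [Fintype n] [DecidableEq n] {A : Matrix m m ℂ} {B : Matrix n n ℂ}
    (hA : A.IsHermitian) (hB : B.IsHermitian)
    (hAB : X ^ Fintype.card n * A.charpoly = X ^ Fintype.card m * B.charpoly) :
    vonNeumannEntropy hA = vonNeumannEntropy hB :=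
  hA.sum_eigenvalues_eq_of_X_pow_mul_charpoly_eq hB hAB Real.negMulLog_zero

section PartialTrace

variable {a b : Type} [Fintype a] [Fintype b]

lemma ptraceB_densityMatrix (ψ : a × b → ℂ) :
    ptraceB (densityMatrix ψ) = of (Function.curry ψ) * (of (Function.curry ψ))ᴴ := by
  ext i j
  simp [ptraceB, densityMatrix, mul_apply]

lemma ptraceA_densityMatrix (ψ : a × b → ℂ) :
    ptraceA (densityMatrix ψ) = ((of (Function.curry ψ))ᴴ * of (Function.curry ψ))ᵀ := by
  ext k l
  simp [ptraceA, densityMatrix, mul_apply, mul_comm]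

end PartialTrace

theorem entropy_ptraceB_eq_entropy_ptraceA_general
    {a b : Type} [Fintype a] [DecidableEq a]
    [Fintype b] [DecidableEq b]
    (ψ : a × b → ℂ)
    (hA : (ptraceB (densityMatrix ψ)).IsHermitian)
    (hB : (ptraceA (densityMatrix ψ)).IsHermitian) :
    vonNeumannEntropy hA = vonNeumannEntropy hB := by
  refine vonNeumannEntropy_eq_of_X_pow_mul_charpoly_eq hA hB ?_
  rw [ptraceB_densityMatrix, ptraceA_densityMatrix, charpoly_transpose]
  exact charpoly_mul_comm' _ _

/-- For a pure bipartite state, the entropies of the two marginals coincide. -/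
theorem entropy_ptraceB_eq_entropy_ptraceA
    {a b : Type} [Fintype a] [DecidableEq a] [Nonempty a]
    [Fintype b] [DecidableEq b] [Nonempty b]
    (ψ : a × b → ℂ) (hψ : ∑ x, ‖ψ x‖ ^ 2 = 1)
    (hA : (ptraceB (densityMatrix ψ)).IsHermitian)
    (hB : (ptraceA (densityMatrix ψ)).IsHermitian) :
    vonNeumannEntropy hA = vonNeumannEntropy hB :=
  entropy_ptraceB_eq_entropy_ptraceA_general ψ hA hB
end

section
/- Let A and B₁, …, B_m (m ≥ 1) be finite nonempty types and let ψ be a unit vector on A × (B₁ × ⋯ × B_m) with density matrix ρ = |ψ⟩⟨ψ|. For each permutation σ of Fin m define the vector E^σ ∈ ℝ^m by E^σ_{σ(k)} := S(ρ_{B_{σ(1)} ⋯ B_{σ(k)}}) − S(ρ_{B_{σ(1)} ⋯ B_{σ(k−1)}}) for k = 1, …, m (where S(ρ_∅) = 0 and ρ_T denotes the reduction of ρ onto the Bobs indexed by T). Then every point v in the convex hull (over ℝ) of the finite set {E^σ : σ a permutation of Fin m} satisfies ∑_{k=1}^m v_k = S(ρ_A). (Thus the outer polytope F′ of achievable entanglement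 distributions in entanglement combing lies in the hyperplane of total entanglement S(A).) -/
/-- The function on `Fin m` agreeing with `x` on `T` and with `z` outside `T`. -/
def mergeOn {ι : Type} [DecidableEq ι] {d : ι → Type} (T : Finset ι)
    (x : ∀ i : {i // i ∈ T}, d i) (z : ∀ i : {i // i ∉ T}, d i) : ∀ i, d i :=
  fun i => if h : i ∈ T then x ⟨i, h⟩ else z ⟨i, h⟩

/-- The reduction of a state on `A × (B₁ × ⋯ × B_m)` onto the Bobs indexed by `T`:
all other systems (Alice and the remaining Bobs) are traced out. -/
noncomputable def reduceBobs {A : Type} [Fintype A] {m : ℕ} {B : Fin m → Type}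
    [∀ k, Fintype (B k)] [∀ k, DecidableEq (B k)]
    (ρ : Matrix (A × ∀ k, B k) (A × ∀ k, B k) ℂ) (T : Finset (Fin m)) :
    Matrix (∀ k : {k // k ∈ T}, B k) (∀ k : {k // k ∈ T}, B k) ℂ :=
  fun x y => ∑ a : A, ∑ z : ∀ k : {k // k ∉ T}, B k,
    ρ (a, mergeOn T x z) (a, mergeOn T y z)

/-- The reduction of a state on `A × (B₁ × ⋯ × B_m)` onto Alice's system `A`. -/
noncomputable def reduceA {A : Type} [Fintype A] {m : ℕ} {B : Fin m → Type}
    [∀ k, Fintype (B k)]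
    (ρ : Matrix (A × ∀ k, B k) (A × ∀ k, B k) ℂ) : Matrix A A ℂ :=
  fun a a' => ∑ b : ∀ k, B k, ρ (a, b) (a', b)

open Polynomial Matrix Finset

section Entropy

variable {n p : Type} [Fintype n] [DecidableEq n] [Fintype p] [DecidableEq p]

lemma vonNeumannEntropy_eq_sum_roots_charpoly {M : Matrix n n ℂ} (hM : M.IsHermitian) :
    vonNeumannEntropy hM = (M.charpoly.roots.map fun z => Real.negMulLog z.re).sum := by
  simp [vonNeumannEntropy, hM.roots_charpoly_eq_eigenvalues, Finset.sum_eq_multiset_sum,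
    -sum_map_val]

lemma vonNeumannEntropy_eq_of_X_pow_mul_charpoly_eq_s3 {M : Matrix n n ℂ} {N : Matrix p p ℂ}
    (hM : M.IsHermitian) (hN : N.IsHermitian) {a b : ℕ}
    (h : X ^ a * M.charpoly = X ^ b * N.charpoly) :
    vonNeumannEntropy hM = vonNeumannEntropy hN := by
  have hroots := congrArg (fun q : ℂ[X] => (q.roots.map fun z => Real.negMulLog z.re).sum) h
  rw [vonNeumannEntropy_eq_sum_roots_charpoly, vonNeumannEntropy_eq_sum_roots_charpoly]
  -- the extra roots are `0`, and `negMulLog 0 = 0`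
  simpa [roots_mul, M.charpoly_monic.ne_zero, N.charpoly_monic.ne_zero,
    Multiset.nsmul_singleton, Multiset.map_replicate] using hroots

lemma vonNeumannEntropy_eq_zero_of_trace_eq_one [Unique n] {M : Matrix n n ℂ}
    (hM : M.IsHermitian) (htr : M.trace = 1) : vonNeumannEntropy hM = 0 := by
  have heig : hM.eigenvalues default = 1 := by
    simpa [hM.trace_eq_sum_eigenvalues] using htr
  simp [vonNeumannEntropy, heig]

end Entropy

def piMemUnivEquiv {ι : Type} [Fintype ι] (d : ι → Type) :
    (∀ i : {i // i ∈ (univ : Finset ι)}, d i) ≃ ∀ i, d i where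
  toFun x i := x ⟨i, mem_univ i⟩
  invFun x i := x i
  left_inv _ := rfl
  right_inv _ := rfl

lemma mergeOn_univ {ι : Type} [Fintype ι] [DecidableEq ι] {d : ι → Type}
    (x : ∀ i : {i // i ∈ (univ : Finset ι)}, d i) (z : ∀ i : {i // i ∉ (univ : Finset ι)}, d i) :
    mergeOn univ x z = piMemUnivEquiv d x :=
  funext fun i => dif_pos (mem_univ i)

lemma trace_densityMatrix {n : Type} [Fintype n] (ψ : n → ℂ) :
    (densityMatrix ψ).trace = ∑ x, (‖ψ x‖ : ℂ) ^ 2 :=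
  Fintype.sum_congr _ _ fun x => Complex.mul_conj' (ψ x)

def amplitudeMatrix {A β : Type} (ψ : A × β → ℂ) : Matrix β A ℂ :=
  of fun b a => ψ (a, b)

section Reductions

variable {A : Type} [Fintype A] {m : ℕ} {B : Fin m → Type} [∀ k, Fintype (B k)]

lemma reduceA_densityMatrix (ψ : A × (∀ k, B k) → ℂ) :
    reduceA (densityMatrix ψ) = ((amplitudeMatrix ψ)ᴴ * amplitudeMatrix ψ)ᵀ := by
  ext a a'
  exact Fintype.sum_congr _ _ fun b => mul_comm _ _

variable [∀ k, DecidableEq (B k)]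

lemma trace_reduceBobs (ρ : Matrix (A × ∀ k, B k) (A × ∀ k, B k) ℂ) (T : Finset (Fin m)) :
    (reduceBobs ρ T).trace = ρ.trace := by
  -- `mergeOn T` is, by definition, the inverse of `Equiv.piEquivPiSubtypeProd (· ∈ T) B`.
  let e := (Equiv.piEquivPiSubtypeProd (· ∈ T) B).symm
  calc (reduceBobs ρ T).trace = ∑ x, ∑ a, ∑ z, ρ.diag (a, e (x, z)) := rfl
    _ = ∑ a, ∑ x, ∑ z, ρ.diag (a, e (x, z)) := Finset.sum_comm
    _ = ∑ a, ∑ xz, ρ.diag (a, e xz) := Fintype.sum_congr _ _ fun a =>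
      (Fintype.sum_prod_type' fun x z => ρ.diag (a, e (x, z))).symm
    _ = ∑ a, ∑ b, ρ.diag (a, b) :=
      Fintype.sum_congr _ _ fun a => e.sum_comp fun b => ρ.diag (a, b)
    _ = ρ.trace := (Fintype.sum_prod_type' fun a b => ρ.diag (a, b)).symm

lemma vonNeumannEntropy_reduceBobs_empty (ψ : A × (∀ k, B k) → ℂ) (hψ : ∑ x, ‖ψ x‖ ^ 2 = 1)
    (h : (reduceBobs (densityMatrix ψ) ∅).IsHermitian) : vonNeumannEntropy h = 0 :=
  vonNeumannEntropy_eq_zero_of_trace_eq_one h <| by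
    rw [trace_reduceBobs, trace_densityMatrix]
    exact_mod_cast hψ

lemma reduceBobs_univ_densityMatrix (ψ : A × (∀ k, B k) → ℂ) :
    reduceBobs (densityMatrix ψ) univ =
      reindex (piMemUnivEquiv B).symm (piMemUnivEquiv B).symm
        (amplitudeMatrix ψ * (amplitudeMatrix ψ)ᴴ) := by
  have : IsEmpty {k // k ∉ (univ : Finset (Fin m))} := ⟨fun k => k.2 (mem_univ _)⟩
  ext x y
  refine Fintype.sum_congr _ _ fun a => ?_
  simp only [mergeOn_univ, Fintype.sum_unique]
  rfl

lemma vonNeumannEntropy_reduceBobs_univ [DecidableEq A] (ψ : A × (∀ k, B k) → ℂ)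
    (hB : (reduceBobs (densityMatrix ψ) univ).IsHermitian)
    (hA : (reduceA (densityMatrix ψ)).IsHermitian) :
    vonNeumannEntropy hB = vonNeumannEntropy hA := by
  refine vonNeumannEntropy_eq_of_X_pow_mul_charpoly_eq_s3 hB hA
    (a := Fintype.card A) (b := Fintype.card (∀ k, B k)) ?_
  rw [reduceA_densityMatrix, reduceBobs_univ_densityMatrix, charpoly_reindex, charpoly_transpose]
  exact charpoly_mul_comm' _ _

end Reductions

lemma sum_prefix_sub_eq_univ_sub_empty {M : Type*} [AddCommGroup M] {m : ℕ} (F : Finset (Fin m) → M)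
    (σ : Equiv.Perm (Fin m)) :
    ∑ j, (F (univ.filter fun i => σ.symm i ≤ σ.symm j) -
      F (univ.filter fun i => σ.symm i < σ.symm j)) = F univ - F ∅ := by
  set g : ℕ → M := fun t => F (univ.filter fun i => (σ.symm i : ℕ) < t)
  have hstep (k : Fin m) : F (univ.filter fun i => σ.symm i ≤ k) -
      F (univ.filter fun i => σ.symm i < k) = g (k + 1) - g k := by
    simp only [g, Fin.le_def, Fin.lt_def, Nat.lt_succ_iff]
  calc _ = ∑ j, (g (σ.symm j + 1) - g (σ.symm j)) := Fintype.sum_congr _ _ fun j => hstep _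
    _ = ∑ k : Fin m, (g (k + 1) - g k) := σ.symm.sum_comp fun k => g (k + 1) - g k
    _ = g m - g 0 := by rw [Fin.sum_univ_eq_sum_range (fun k => g (k + 1) - g k), sum_range_sub]
    _ = F univ - F ∅ := by
        simp only [g, Fin.is_lt, filter_true, Nat.not_lt_zero, filter_false]

lemma convexHull_subset_setOf_sum_eq {ι : Type*} [Fintype ι] {s : Set (ι → ℝ)} {c : ℝ}
    (hs : ∀ w ∈ s, ∑ k, w k = c) : convexHull ℝ s ⊆ {w | ∑ k, w k = c} :=
  convexHull_min hs <| convex_hyperplane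
    ⟨fun _ _ => sum_add_distrib, fun _ _ => (mul_sum ..).symm⟩ c

theorem convexHull_merging_points_subset_hyperplane_general
    {A : Type} [Fintype A] [DecidableEq A]
    {m : ℕ} {B : Fin m → Type}
    [∀ k, Fintype (B k)] [∀ k, DecidableEq (B k)]
    (ψ : A × (∀ k, B k) → ℂ) (hψ : ∑ x, ‖ψ x‖ ^ 2 = 1)
    (hs : ∀ T : Finset (Fin m), (reduceBobs (densityMatrix ψ) T).IsHermitian)
    (hA : (reduceA (densityMatrix ψ)).IsHermitian) :
    ∀ v ∈ convexHull ℝ (Set.range fun σ : Equiv.Perm (Fin m) => fun j : Fin m =>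
        vonNeumannEntropy (hs (Finset.univ.filter fun i : Fin m => σ.symm i ≤ σ.symm j)) -
          vonNeumannEntropy (hs (Finset.univ.filter fun i : Fin m => σ.symm i < σ.symm j))),
      ∑ k, v k = vonNeumannEntropy hA := by
  refine convexHull_subset_setOf_sum_eq ?_
  rintro _ ⟨σ, rfl⟩
  rw [sum_prefix_sub_eq_univ_sub_empty (fun T => vonNeumannEntropy (hs T)),
    vonNeumannEntropy_reduceBobs_univ, vonNeumannEntropy_reduceBobs_empty ψ hψ, sub_zero]

/-- Every point of the convex hull of the extreme points `E^σ`, obtained by merging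
the Bobs to Alice in the order prescribed by a permutation `σ`, has coordinate sum
equal to `S(ρ_A)`: the outer combing polytope lies in the hyperplane of total
entanglement `S(A)`. -/
theorem convexHull_merging_points_subset_hyperplane
    {A : Type} [Fintype A] [DecidableEq A] [Nonempty A]
    {m : ℕ} (hm : 1 ≤ m) {B : Fin m → Type}
    [∀ k, Fintype (B k)] [∀ k, DecidableEq (B k)] [∀ k, Nonempty (B k)]
    (ψ : A × (∀ k, B k) → ℂ) (hψ : ∑ x, ‖ψ x‖ ^ 2 = 1)
    (hs : ∀ T : Finset (Fin m), (reduceBobs (densityMatrix ψ) T).IsHermitian)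
    (hA : (reduceA (densityMatrix ψ)).IsHermitian) :
    ∀ v ∈ convexHull ℝ (Set.range fun σ : Equiv.Perm (Fin m) => fun j : Fin m =>
        vonNeumannEntropy (hs (Finset.univ.filter fun i : Fin m => σ.symm i ≤ σ.symm j)) -
          vonNeumannEntropy (hs (Finset.univ.filter fun i : Fin m => σ.symm i < σ.symm j))),
      ∑ k, v k = vonNeumannEntropy hA :=
  convexHull_merging_points_subset_hyperplane_general ψ hψ hs hA
end

section
/- Let κ be a finite type and for each k : κ let ρ_k be a density matrix on a finite nonempty type d k. Then the iterated Kronecker product ⊗ₖ_{k : κ} ρ_k, indexed by ∀ k, d k, is a density matrix and S(⊗ₖ_{k} ρ_k) = ∑_{k} S(ρ_k). (This expresses that the final combed state |φ₁⟩_{A₁,B₁} ⊗ ⋯ ⊗ |φ_m⟩_{A_m,B_m} carries total entanglement ∑_k E_k = ∑_k S(ρ_{A_k}) between Alice and all Bobs.) -/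
open scoped ComplexOrder

/-- The iterated Kronecker product of the matrices `ρ k`, indexed by `∀ k, d k`,
with entries `(⊗ₖ_k ρ_k) x y = ∏ k, (ρ k) (x k) (y k)`. -/
noncomputable def piKronecker {κ : Type} [Fintype κ] {d : κ → Type}
    (ρ : ∀ k, Matrix (d k) (d k) ℂ) :
    Matrix (∀ k, d k) (∀ k, d k) ℂ :=
  fun x y => ∏ k, ρ k (x k) (y k)

/-!
Diagonalise each factor, `ρ k = U k * D k * (U k)ᴴ`. As `piKronecker` is multiplicative and
commutes with `ᴴ`, `piKronecker ρ = U * D * Uᴴ` with `U = piKronecker U` unitary and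
`D = piKronecker D` diagonal with nonnegative entries `∏ k, λ k (x k)`. This gives positivity,
and comparing characteristic polynomials shows that these products are the eigenvalues of
`piKronecker ρ`, with multiplicity. The entropy then splits by the Leibniz rule
`η (a * b) = b * η a + a * η b` for `η = negMulLog`, together with `∑ i, λ k i = 1`.
-/

open Matrix

namespace Real

theorem negMulLog_prod {κ : Type*} [DecidableEq κ] (s : Finset κ) (a : κ → ℝ) :
    negMulLog (∏ k ∈ s, a k) = ∑ k ∈ s, ∏ j ∈ s, if j = k then negMulLog (a j) else a j := by
  induction s using Finset.induction_on with
  | empty => simp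
  | @insert i s hi ih =>
    have hne : ∀ k ∈ s, i ≠ k := fun k hk h => hi (h ▸ hk)
    have hterm : ∀ k ∈ s, (∏ j ∈ insert i s, if j = k then negMulLog (a j) else a j) =
        a i * ∏ j ∈ s, if j = k then negMulLog (a j) else a j := fun k hk => by
      rw [Finset.prod_insert hi, if_neg (hne k hk)]
    rw [Finset.sum_insert hi, Finset.sum_congr rfl hterm, ← Finset.mul_sum, ← ih,
      Finset.prod_insert hi, Finset.prod_insert hi, if_pos rfl,
      Finset.prod_congr rfl fun j hj => if_neg (hne j hj).symm, negMulLog_mul]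
    ring

theorem sum_negMulLog_prod {κ : Type*} [Fintype κ] [DecidableEq κ] {d : κ → Type*}
    [∀ k, Fintype (d k)] (f : ∀ k, d k → ℝ) (hf : ∀ k, ∑ i, f k i = 1) :
    ∑ x : ∀ k, d k, negMulLog (∏ k, f k (x k)) = ∑ k, ∑ i, negMulLog (f k i) := by
  simp_rw [negMulLog_prod]
  rw [Finset.sum_comm]
  refine Finset.sum_congr rfl fun k _ => ?_
  rw [← Fintype.prod_sum (fun j i => if j = k then negMulLog (f j i) else f j i)]
  simp_rw [Finset.sum_ite_irrel, hf, Finset.prod_ite_eq', if_pos (Finset.mem_univ k)]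

end Real

section piKronecker

variable {κ : Type} [Fintype κ] {d : κ → Type}

theorem piKronecker_conjTranspose (A : ∀ k, Matrix (d k) (d k) ℂ) :
    (piKronecker A)ᴴ = piKronecker fun k => (A k)ᴴ := by
  ext x y
  simp [piKronecker]

theorem piKronecker_diagonal [∀ k, DecidableEq (d k)] (v : ∀ k, d k → ℂ) :
    piKronecker (fun k => diagonal (v k)) = diagonal fun x => ∏ k, v k (x k) := by
  ext x y
  by_cases h : x = y
  · simp [piKronecker, h]
  · obtain ⟨k, hk⟩ := Function.ne_iff.mp h
    rw [diagonal_apply_ne _ h]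
    exact Finset.prod_eq_zero (Finset.mem_univ k) (diagonal_apply_ne _ hk)

theorem piKronecker_one [∀ k, DecidableEq (d k)] :
    piKronecker (fun k => (1 : Matrix (d k) (d k) ℂ)) = 1 := by
  simpa using piKronecker_diagonal (d := d) fun _ _ => 1

variable [DecidableEq κ] [∀ k, Fintype (d k)]

theorem piKronecker_mul (A B : ∀ k, Matrix (d k) (d k) ℂ) :
    piKronecker A * piKronecker B = piKronecker fun k => A k * B k := by
  ext x y
  simp only [piKronecker, mul_apply, Finset.prod_univ_sum, Fintype.piFinset_univ,
    Finset.prod_mul_distrib]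

theorem trace_piKronecker (A : ∀ k, Matrix (d k) (d k) ℂ) :
    (piKronecker A).trace = ∏ k, (A k).trace := by
  simp only [trace, diag, piKronecker, Finset.prod_univ_sum, Fintype.piFinset_univ]

variable [∀ k, DecidableEq (d k)]

theorem piKronecker_mem_unitaryGroup {U : ∀ k, Matrix (d k) (d k) ℂ}
    (hU : ∀ k, U k ∈ unitaryGroup (d k) ℂ) : piKronecker U ∈ unitaryGroup (∀ k, d k) ℂ := by
  rw [mem_unitaryGroup_iff, star_eq_conjTranspose, piKronecker_conjTranspose, piKronecker_mul]
  simp_rw [← star_eq_conjTranspose, fun k => mem_unitaryGroup_iff.mp (hU k), piKronecker_one]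

theorem piKronecker_eq_conj_diagonal {A : ∀ k, Matrix (d k) (d k) ℂ}
    (hA : ∀ k, (A k).IsHermitian) :
    piKronecker A = piKronecker (fun k => ((hA k).eigenvectorUnitary : Matrix (d k) (d k) ℂ)) *
      diagonal (fun x => ((∏ k, (hA k).eigenvalues (x k) : ℝ) : ℂ)) *
      (piKronecker fun k => ((hA k).eigenvectorUnitary : Matrix (d k) (d k) ℂ))ᴴ := by
  have hdiag : diagonal (fun x => ((∏ k, (hA k).eigenvalues (x k) : ℝ) : ℂ)) =
      piKronecker fun k => diagonal fun i => ((hA k).eigenvalues i : ℂ) := by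
    rw [piKronecker_diagonal]
    push_cast
    rfl
  rw [hdiag, piKronecker_conjTranspose, piKronecker_mul, piKronecker_mul]
  congr 1
  funext k
  conv_lhs => rw [(hA k).spectral_theorem, Unitary.conjStarAlgAut_apply]
  rfl

theorem Matrix.PosSemidef.piKronecker {A : ∀ k, Matrix (d k) (d k) ℂ}
    (hA : ∀ k, (A k).PosSemidef) : (piKronecker A).PosSemidef := by
  rw [piKronecker_eq_conj_diagonal fun k => (hA k).1]
  refine PosSemidef.mul_mul_conjTranspose_same (PosSemidef.diagonal fun x => ?_) _
  show (0 : ℂ) ≤ _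
  exact_mod_cast Finset.prod_nonneg fun k _ => (hA k).eigenvalues_nonneg (x k)

end piKronecker

section Spectrum

variable {n : Type} [Fintype n] [DecidableEq n] {A U : Matrix n n ℂ} {f : n → ℝ}

theorem Matrix.IsHermitian.map_eigenvalues_eq_of_eq_conj_diagonal (hA : A.IsHermitian)
    (hU : U ∈ unitaryGroup n ℂ) (h : A = U * diagonal (fun i => (f i : ℂ)) * Uᴴ) :
    Finset.univ.val.map hA.eigenvalues = Finset.univ.val.map f := by
  apply Multiset.map_injective Complex.ofReal_injective
  have hUU : Uᴴ * U = 1 := mem_unitaryGroup_iff'.mp hU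
  rw [Multiset.map_map, Multiset.map_map, ← RCLike.ofReal_eq_complex_ofReal,
    ← hA.roots_charpoly_eq_eigenvalues, h, charpoly_mul_comm, ← mul_assoc, hUU, one_mul,
    charpoly_diagonal, Polynomial.roots_prod _ _ (Finset.prod_ne_zero_iff.mpr fun i _ =>
      Polynomial.X_sub_C_ne_zero _)]
  simp

theorem vonNeumannEntropy_eq_of_eq_conj_diagonal (hA : A.IsHermitian)
    (hU : U ∈ unitaryGroup n ℂ) (h : A = U * diagonal (fun i => (f i : ℂ)) * Uᴴ) :
    vonNeumannEntropy hA = ∑ i, Real.negMulLog (f i) := by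
  simpa [vonNeumannEntropy, Multiset.map_map, Finset.sum_map_val] using
    congrArg (fun m => (m.map Real.negMulLog).sum)
      (hA.map_eigenvalues_eq_of_eq_conj_diagonal hU h)

end Spectrum

theorem entropy_piKronecker_eq_sum_general
    {κ : Type} [Fintype κ] [DecidableEq κ] {d : κ → Type}
    [∀ k, Fintype (d k)] [∀ k, DecidableEq (d k)]
    (ρ : ∀ k, Matrix (d k) (d k) ℂ)
    (hρ : ∀ k, (ρ k).PosSemidef) (hρtr : ∀ k, (ρ k).trace = 1) :
    ∃ h : (piKronecker ρ).PosSemidef, (piKronecker ρ).trace = 1 ∧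
      vonNeumannEntropy h.1 = ∑ k, vonNeumannEntropy (hρ k).1 := by
  have hPSD : (piKronecker ρ).PosSemidef := PosSemidef.piKronecker hρ
  have hU := piKronecker_mem_unitaryGroup fun k => ((hρ k).1.eigenvectorUnitary).2
  have hsum : ∀ k, ∑ i, (hρ k).1.eigenvalues i = 1 := fun k => by
    have := (hρ k).1.trace_eq_sum_eigenvalues.symm.trans (hρtr k)
    simp only [RCLike.ofReal_eq_complex_ofReal] at this
    exact_mod_cast this
  refine ⟨hPSD, by simp [trace_piKronecker, hρtr], ?_⟩
  rw [vonNeumannEntropy_eq_of_eq_conj_diagonal hPSD.1 hU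
    (piKronecker_eq_conj_diagonal fun k => (hρ k).1), Real.sum_negMulLog_prod _ hsum]
  rfl

/-- The iterated Kronecker product of density matrices is a density matrix, and its
von Neumann entropy is the sum of the entropies of the factors. -/
theorem entropy_piKronecker_eq_sum
    {κ : Type} [Fintype κ] [DecidableEq κ] {d : κ → Type}
    [∀ k, Fintype (d k)] [∀ k, DecidableEq (d k)] [∀ k, Nonempty (d k)]
    (ρ : ∀ k, Matrix (d k) (d k) ℂ)
    (hρ : ∀ k, (ρ k).PosSemidef) (hρtr : ∀ k, (ρ k).trace = 1) :
    ∃ h : (piKronecker ρ).PosSemidef, (piKronecker ρ).trace = 1 ∧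
      vonNeumannEntropy h.1 = ∑ k, vonNeumannEntropy (hρ k).1 :=
  entropy_piKronecker_eq_sum_general ρ hρ hρtr
end
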